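/- arXiv:2312.11287 — 2 statements merged into one kernel-verified Lean document; each statement's English description precedes it below -/
import Mathlib

section
/- Let G be a graph on the vertex set [n−1] and suppose H is a facet subgraph of the suspension Ĝ with bipartition [n] = V₁ ⊔ V₂ where n ∈ V₁. Then μ(H) = 2^{c(G[V₂])}, where c(G[V₂]) is the number of connected components of the induced subgraph of G on V₂. -/
open Finset

/-- The symmetric edge polytope of a finite simple graph `G`: the convex hull of the
vectors `e_i - e_j` for all adjacent pairs `i, j`. -/
def symEdgePolytope {V : Type*} [DecidableEq V] (G : SimpleGraph V) : Set (V → ℝ) :=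
  convexHull ℝ {x : V → ℝ | ∃ i j : V, G.Adj i j ∧
    x = fun k => (if k = i then (1 : ℝ) else 0) - (if k = j then (1 : ℝ) else 0)}

/-- A facet of a polytope `P`: a maximal proper (exposed) face of `P`. -/
def IsFacet {V : Type*} (P F : Set (V → ℝ)) : Prop :=
  IsExposed ℝ P F ∧ F ≠ P ∧
    ∀ F' : Set (V → ℝ), IsExposed ℝ P F' → F' ≠ P → F ⊆ F' → F' = F

/-- `N(P)`: the number of facets of a polytope `P`. -/
noncomputable def numFacets {V : Type*} (P : Set (V → ℝ)) : ℕ :=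
  Set.ncard {F : Set (V → ℝ) | IsFacet P F}

/-- `f : V → ℤ` defines a facet of the symmetric edge polytope of `G` if the hyperplane
`{x | ∑ i, f i * x i = 1}` supports a facet of it. -/
def DefinesFacet {V : Type*} [Fintype V] [DecidableEq V] (G : SimpleGraph V) (f : V → ℤ) :
    Prop :=
  (∀ x ∈ symEdgePolytope G, ∑ i : V, (f i : ℝ) * x i ≤ 1) ∧
    IsFacet (symEdgePolytope G) {x ∈ symEdgePolytope G | ∑ i : V, (f i : ℝ) * x i = 1}

/-- The facet subgraph associated with `f`: the spanning subgraph of `G` with edge set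
`E_f = {{i, j} ∈ E(G) : |f i - f j| = 1}`. -/
def facetSubgraph {V : Type*} (G : SimpleGraph V) (f : V → ℤ) : SimpleGraph V where
  Adj i j := G.Adj i j ∧ |f i - f j| = 1
  symm := by
    constructor
    rintro i j ⟨h1, h2⟩
    exact ⟨h1.symm, by rwa [abs_sub_comm]⟩
  loopless := by
    constructor
    rintro i ⟨h, -⟩
    exact G.loopless.irrefl i h

/-- `FS(G)`: the set of all facet subgraphs of `G`. -/
def facetSubgraphs {V : Type*} [Fintype V] [DecidableEq V] (G : SimpleGraph V) :
    Set (SimpleGraph V) :=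
  {H | ∃ f : V → ℤ, DefinesFacet G f ∧ facetSubgraph G f = H}

/-- `μ(H)`: the number of facets of the symmetric edge polytope of `G` whose facet
subgraph is `H`. -/
noncomputable def mu {V : Type*} [Fintype V] [DecidableEq V] (G : SimpleGraph V)
    (H : SimpleGraph V) : ℕ :=
  Set.ncard {F : Set (V → ℝ) | ∃ f : V → ℤ, DefinesFacet G f ∧
    F = {x ∈ symEdgePolytope G | ∑ i : V, (f i : ℝ) * x i = 1} ∧ facetSubgraph G f = H}

/-- The suspension `Ĝ` of a graph `G`: a new apex vertex (`none`) is joined to all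
vertices of `G`. -/
def suspension {V : Type*} (G : SimpleGraph V) : SimpleGraph (Option V) where
  Adj x y :=
    match x, y with
    | some a, some b => G.Adj a b
    | some _, none => True
    | none, some _ => True
    | none, none => False
  symm := by
    constructor
    rintro (_ | a) (_ | b) h
    · exact h
    · trivial
    · trivial
    · exact h.symm
  loopless := by
    constructor
    rintro (_ | a) h
    · exact h
    · exact G.loopless.irrefl a h


/-!
A facet functional `f` of `P_Ĝ` has edge differences at most one, and its facet subgraph is
connected: otherwise raising `f` by one on a component would cut out a strictly larger proper
face. Normalising `f(apex) = 0`, the parity of `f` along the connected, bipartite facet subgraph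
forces `f = ±1` on `V₂` and `f = 0` elsewhere, with a constant sign on each component of `G[V₂]`.
Conversely, every choice of signs on these components has the same facet subgraph, and a
functional with edge differences at most one and a connected facet subgraph defines a facet.
Distinct sign choices give distinct facets, as the edge vectors `e_v - e_apex` show.
-/

theorem mem_convexHull_sep_of_apply_eq {E : Type*} [AddCommGroup E] [Module ℝ E] {s : Set E}
    (l : E →ₗ[ℝ] ℝ) {c : ℝ} (hs : ∀ y ∈ s, l y ≤ c) {x : E} (hx : x ∈ convexHull ℝ s)
    (hlx : l x = c) : x ∈ convexHull ℝ {y ∈ s | l y = c} := by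
  rw [_root_.convexHull_eq] at hx
  obtain ⟨ι, t, w, z, hw₀, hw₁, hz, rfl⟩ := hx
  have hgap : ∑ i ∈ t, w i * (c - l (z i)) = 0 := by
    rw [Finset.centerMass_eq_of_sum_1 _ _ hw₁, map_sum] at hlx
    simp only [map_smul, smul_eq_mul] at hlx
    simp only [mul_sub, Finset.sum_sub_distrib, ← Finset.sum_mul, hw₁, hlx]
    ring
  have htight : ∀ i ∈ t, w i ≠ 0 → l (z i) = c := fun i hi hwi => by
    have hnonneg : ∀ j ∈ t, 0 ≤ w j * (c - l (z j)) := fun j hj =>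
      mul_nonneg (hw₀ j hj) (sub_nonneg.2 (hs _ (hz j hj)))
    have := (Finset.sum_eq_zero_iff_of_nonneg hnonneg).1 hgap i hi
    linarith [(mul_eq_zero.1 this).resolve_left hwi]
  rw [← Finset.centerMass_filter_ne_zero]
  refine Finset.centerMass_mem_convexHull _ (fun i hi => hw₀ i (Finset.mem_filter.1 hi).1)
    (by rw [Finset.sum_filter_ne_zero, hw₁]; exact one_pos) fun i hi => ?_
  obtain ⟨hi, hwi⟩ := Finset.mem_filter.1 hi
  exact ⟨hz i hi, htight i hi hwi⟩

theorem SimpleGraph.Reachable.apply_eq_of_forall_adj {W β : Type*} {G : SimpleGraph W}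
    {φ : W → β} (h : ∀ u v, G.Adj u v → φ u = φ v) {u v : W} (huv : G.Reachable u v) :
    φ u = φ v := by
  obtain ⟨p⟩ := huv
  induction p with
  | nil => rfl
  | cons hadj _ ih => exact (h _ _ hadj).trans ih

theorem SimpleGraph.preconnected_of_forall_adj {W : Type*} {G : SimpleGraph W} {p : W}
    (hp : ∀ x, x ≠ p → G.Adj x p) : G.Preconnected := by
  have hreach (x : W) : G.Reachable x p := by
    by_cases hx : x = p
    · exact hx ▸ .refl x
    · exact (hp x hx).reachable
  exact fun x y => (hreach x).trans (hreach y).symm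

noncomputable def dotCLM {W : Type*} [Fintype W] (r : W → ℝ) : StrongDual ℝ (W → ℝ) :=
  LinearMap.toContinuousLinearMap (dotProductBilin ℝ ℝ r)

theorem dotCLM_apply {W : Type*} [Fintype W] (r x : W → ℝ) : dotCLM r x = ∑ i, r i * x i :=
  rfl

theorem eq_or_facetSubgraph_adj {W : Type*} {G : SimpleGraph W} {g : W → ℤ}
    (hb : ∀ i j, G.Adj i j → g i - g j ≤ 1) {i j : W} (hij : G.Adj i j) :
    g i = g j ∨ (facetSubgraph G g).Adj i j := by
  by_cases h : |g i - g j| = 1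
  · exact Or.inr ⟨hij, h⟩
  · have := hb i j hij
    have := hb j i hij.symm
    grind

section SymEdgePolytope

variable {W : Type*} [DecidableEq W] {G : SimpleGraph W}

def edgeVec (i j : W) : W → ℝ := Pi.single i 1 - Pi.single j 1

theorem symEdgePolytope_eq_convexHull :
    symEdgePolytope G = convexHull ℝ {x | ∃ i j, G.Adj i j ∧ x = edgeVec i j} := by
  have (i j : W) : edgeVec i j =
      fun k => (if k = i then (1 : ℝ) else 0) - (if k = j then (1 : ℝ) else 0) := by
    ext k; simp [edgeVec, Pi.single_apply]
  simp only [symEdgePolytope, this]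

theorem edgeVec_mem_symEdgePolytope {i j : W} (h : G.Adj i j) :
    edgeVec i j ∈ symEdgePolytope G :=
  symEdgePolytope_eq_convexHull (G := G) ▸ subset_convexHull ℝ _ ⟨i, j, h, rfl⟩

theorem symEdgePolytope_subset {C : Set (W → ℝ)} (hC : Convex ℝ C)
    (h : ∀ i j, G.Adj i j → edgeVec i j ∈ C) : symEdgePolytope G ⊆ C := by
  rw [symEdgePolytope_eq_convexHull]
  exact convexHull_min (by rintro _ ⟨i, j, hij, rfl⟩; exact h i j hij) hC

variable [Fintype W]

theorem sum_mul_edgeVec (r : W → ℝ) (i j : W) : ∑ k, r k * edgeVec i j k = r i - r j := by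
  simp [edgeVec, Pi.single_apply, mul_sub, Finset.sum_sub_distrib]

theorem sum_eq_zero_of_mem_symEdgePolytope {x : W → ℝ} (hx : x ∈ symEdgePolytope G) :
    ∑ i, x i = 0 := by
  have hC : Convex ℝ {y : W → ℝ | dotCLM 1 y = 0} :=
    convex_hyperplane (dotCLM 1).toLinearMap.isLinear 0
  simpa [dotCLM_apply] using symEdgePolytope_subset hC
    (fun i j _ => by simp [dotCLM_apply, edgeVec]) hx

theorem sum_mul_le_one_of_mem_symEdgePolytope {g : W → ℤ}
    (hb : ∀ i j, G.Adj i j → g i - g j ≤ 1) {x : W → ℝ} (hx : x ∈ symEdgePolytope G) :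
    ∑ i, (g i : ℝ) * x i ≤ 1 :=
  symEdgePolytope_subset
    (convex_halfSpace_le (dotCLM (fun i => (g i : ℝ))).toLinearMap.isLinear 1) (fun i j hij => by
      change dotCLM _ (edgeVec i j) ≤ 1
      rw [dotCLM_apply, sum_mul_edgeVec]
      exact_mod_cast hb i j hij) hx

def faceOf (G : SimpleGraph W) (g : W → ℤ) : Set (W → ℝ) :=
  {x ∈ symEdgePolytope G | ∑ i, (g i : ℝ) * x i = 1}

theorem edgeVec_mem_faceOf_iff {g : W → ℤ} {i j : W} (h : G.Adj i j) :
    edgeVec i j ∈ faceOf G g ↔ g i - g j = 1 := by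
  simp only [faceOf, Set.mem_ofPred_eq, edgeVec_mem_symEdgePolytope h, true_and,
    sum_mul_edgeVec]
  exact_mod_cast Iff.rfl

theorem faceOf_add_const (g : W → ℤ) (c : ℤ) : faceOf G (fun i => g i + c) = faceOf G g := by
  ext x
  simp only [faceOf, Set.mem_ofPred_eq, Int.cast_add, add_mul, Finset.sum_add_distrib,
    ← Finset.mul_sum]
  constructor <;> rintro ⟨hx, h⟩ <;>
    simp_all [sum_eq_zero_of_mem_symEdgePolytope hx]

theorem convex_faceOf (g : W → ℤ) : Convex ℝ (faceOf G g) :=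
  (convex_convexHull ℝ _).inter
    (convex_hyperplane (dotCLM (fun i => (g i : ℝ))).toLinearMap.isLinear 1)

theorem faceOf_subset_convexHull {f : W → ℤ} (hb : ∀ i j, G.Adj i j → f i - f j ≤ 1) :
    faceOf G f ⊆ convexHull ℝ {x | ∃ i j, G.Adj i j ∧ f i - f j = 1 ∧ x = edgeVec i j} := by
  rintro x ⟨hx, hfx⟩
  rw [symEdgePolytope_eq_convexHull] at hx
  refine convexHull_mono ?_ (mem_convexHull_sep_of_apply_eq
    (dotCLM (fun i => (f i : ℝ))).toLinearMap ?_ hx hfx)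
  · rintro _ ⟨⟨i, j, hij, rfl⟩, hij'⟩
    exact ⟨i, j, hij, (edgeVec_mem_faceOf_iff hij).1 ⟨edgeVec_mem_symEdgePolytope hij, hij'⟩, rfl⟩
  · rintro _ ⟨i, j, hij, rfl⟩
    exact sum_mul_le_one_of_mem_symEdgePolytope hb (edgeVec_mem_symEdgePolytope hij)

theorem faceOf_subset_faceOf {f g : W → ℤ} (hb : ∀ i j, G.Adj i j → f i - f j ≤ 1)
    (htight : ∀ i j, G.Adj i j → f i - f j = 1 → g i - g j = 1) : faceOf G f ⊆ faceOf G g :=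
  (faceOf_subset_convexHull hb).trans <| convexHull_min
    (by rintro _ ⟨i, j, hij, h, rfl⟩; exact (edgeVec_mem_faceOf_iff hij).2 (htight i j hij h))
    (convex_faceOf g)

theorem isExposed_faceOf {g : W → ℤ} (hb : ∀ i j, G.Adj i j → g i - g j ≤ 1) :
    IsExposed ℝ (symEdgePolytope G) (faceOf G g) := by
  rintro ⟨x₀, hx₀, hgx₀⟩
  refine ⟨dotCLM (fun i => (g i : ℝ)), Set.ext fun x => ?_⟩
  simp only [faceOf, dotCLM_apply, Set.mem_ofPred_eq]
  refine and_congr_right fun hx => ⟨fun h y hy => ?_, fun h => ?_⟩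
  · exact h ▸ sum_mul_le_one_of_mem_symEdgePolytope hb hy
  · exact le_antisymm (sum_mul_le_one_of_mem_symEdgePolytope hb hx) (hgx₀ ▸ h x₀ hx₀)

theorem faceOf_ne_symEdgePolytope {g : W → ℤ} {a b : W} (hab : G.Adj a b)
    (htight : g a - g b = 1) : faceOf G g ≠ symEdgePolytope G := by
  intro h
  have := (edgeVec_mem_faceOf_iff hab.symm).1 (h ▸ edgeVec_mem_symEdgePolytope hab.symm)
  omega

theorem exists_eq_mul_sum_add_of_preconnected {H : SimpleGraph W} (hH : H.Preconnected)
    (k₀ : W) (l : (W → ℝ) →ₗ[ℝ] ℝ) (r : W → ℝ) (m : ℝ)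
    (hl : ∀ i j, H.Adj i j → l (edgeVec i j) = m * (r i - r j)) :
    ∃ c, ∀ x, l x = m * ∑ i, r i * x i + c * ∑ i, x i := by
  set φ : W → ℝ := fun k => l (Pi.single k 1) - m * r k
  have hφ (k : W) : l (Pi.single k 1) = m * r k + φ k₀ := by
    have : φ k = φ k₀ := (hH k k₀).apply_eq_of_forall_adj fun i j h => by
      have := hl i j h
      simp only [edgeVec, map_sub] at this
      simp only [φ]
      linarith
    simp only [φ] at this ⊢
    linarith
  refine ⟨φ k₀, fun x => ?_⟩
  have hsingle (i : W) : (fun j => if i = j then (1 : ℝ) else 0) = Pi.single i 1 := by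
    ext j
    simp [Pi.single_apply, eq_comm]
  simp only [LinearMap.pi_apply_eq_sum_univ l x, hsingle, hφ, smul_eq_mul, Finset.mul_sum,
    ← Finset.sum_add_distrib]
  exact Finset.sum_congr rfl fun i _ => by ring

theorem toExposed_eq_faceOf {g : W → ℤ} (hb : ∀ i j, G.Adj i j → g i - g j ≤ 1) {a b : W}
    (hab : G.Adj a b) (htight : g a - g b = 1) {l : StrongDual ℝ (W → ℝ)} {m : ℝ} (hm : 0 < m)
    (hl : ∀ y ∈ symEdgePolytope G, l y = m * ∑ i, (g i : ℝ) * y i) :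
    l.toExposed (symEdgePolytope G) = faceOf G g := by
  refine Set.ext fun x => and_congr_right fun hx => ?_
  rw [hl x hx]
  constructor
  · intro h
    have hab' := h _ (edgeVec_mem_symEdgePolytope hab)
    rw [hl _ (edgeVec_mem_symEdgePolytope hab), sum_mul_edgeVec,
      show (g a : ℝ) - g b = 1 by exact_mod_cast htight, mul_one] at hab'
    exact le_antisymm (sum_mul_le_one_of_mem_symEdgePolytope hb hx)
      (le_of_mul_le_mul_left (by linarith) hm)
  · intro h y hy
    rw [hl y hy, h, mul_one]
    exact mul_le_of_le_one_right hm.le (sum_mul_le_one_of_mem_symEdgePolytope hb hy)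

theorem eq_faceOf_of_faceOf_subset {g : W → ℤ} (hb : ∀ i j, G.Adj i j → g i - g j ≤ 1)
    (hconn : (facetSubgraph G g).Preconnected) {a b : W} (hab : G.Adj a b)
    (htight : g a - g b = 1) {F : Set (W → ℝ)} (hF : IsExposed ℝ (symEdgePolytope G) F)
    (hFP : F ≠ symEdgePolytope G) (hsub : faceOf G g ⊆ F) : F = faceOf G g := by
  have hv : edgeVec a b ∈ faceOf G g := (edgeVec_mem_faceOf_iff hab).2 htight
  obtain ⟨l, rfl⟩ := hF ⟨_, hsub hv⟩
  -- `l` is maximal on `faceOf G g`, so along the edges of the connected facet subgraph it is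
  -- proportional to `g`
  set m := l (edgeVec a b)
  have hmax : ∀ y ∈ symEdgePolytope G, l y ≤ m := (hsub hv).2
  have htight_eq (i j : W) (hij : G.Adj i j) (h : g i - g j = 1) : l (edgeVec i j) = m :=
    le_antisymm (hmax _ (edgeVec_mem_symEdgePolytope hij))
      ((hsub ((edgeVec_mem_faceOf_iff hij).2 h)).2 _ (edgeVec_mem_symEdgePolytope hab))
  have hl (i j : W) (h : (facetSubgraph G g).Adj i j) :
      l (edgeVec i j) = m * ((g i : ℝ) - g j) := by
    obtain ⟨hij, habs⟩ := h
    rcases (abs_eq zero_le_one).1 habs with h | h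
    · rw [htight_eq i j hij h, show (g i : ℝ) - g j = 1 by exact_mod_cast h, mul_one]
    · have hneg : edgeVec i j = -edgeVec j i := by simp [edgeVec]
      rw [hneg, map_neg, htight_eq j i hij.symm (by omega),
        show (g i : ℝ) - g j = -1 by exact_mod_cast h]
      ring
  obtain ⟨c, hc⟩ := exists_eq_mul_sum_add_of_preconnected hconn a l.toLinearMap _ m hl
  have hlP (y : W → ℝ) (hy : y ∈ symEdgePolytope G) : l y = m * ∑ i, (g i : ℝ) * y i := by
    simpa [sum_eq_zero_of_mem_symEdgePolytope hy] using hc y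
  have hm : 0 < m := by
    have hba := hmax _ (edgeVec_mem_symEdgePolytope hab.symm)
    rw [hlP _ (edgeVec_mem_symEdgePolytope hab.symm), sum_mul_edgeVec,
      show (g b : ℝ) - g a = -1 by exact_mod_cast (by omega : g b - g a = -1)] at hba
    refine lt_of_le_of_ne (by linarith) fun hm0 => hFP ?_
    refine Set.ext fun y => ⟨fun hy => hy.1, fun hy => ⟨hy, fun z hz => ?_⟩⟩
    rw [hlP z hz, hlP y hy, ← hm0, zero_mul, zero_mul]
  exact toExposed_eq_faceOf hb hab htight hm hlP

theorem definesFacet_of_preconnected {g : W → ℤ} (hb : ∀ i j, G.Adj i j → g i - g j ≤ 1)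
    (hconn : (facetSubgraph G g).Preconnected) {a b : W} (hab : (facetSubgraph G g).Adj a b) :
    DefinesFacet G g := by
  obtain ⟨a, b, hab, htight⟩ : ∃ a b, G.Adj a b ∧ g a - g b = 1 := by
    rcases (abs_eq zero_le_one).1 hab.2 with h | h
    exacts [⟨a, b, hab.1, h⟩, ⟨b, a, hab.1.symm, by omega⟩]
  exact ⟨fun _ hx => sum_mul_le_one_of_mem_symEdgePolytope hb hx, isExposed_faceOf hb,
    faceOf_ne_symEdgePolytope hab htight,
    fun _ hF hFP hsub => eq_faceOf_of_faceOf_subset hb hconn hab htight hF hFP hsub⟩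

namespace DefinesFacet

variable {f : W → ℤ} (hf : DefinesFacet G f)
include hf

theorem sub_le_one {i j : W} (hij : G.Adj i j) : f i - f j ≤ 1 := by
  have := hf.1 _ (edgeVec_mem_symEdgePolytope hij)
  rw [sum_mul_edgeVec] at this
  exact_mod_cast this

theorem exists_sub_eq_one : ∃ i j, G.Adj i j ∧ f i - f j = 1 := by
  obtain ⟨-, hne, hmax⟩ := hf.2
  -- otherwise the face is empty, hence contained in the nonempty proper face of `Pi.single i 1`
  by_contra hnone
  have hempty : faceOf G f = ∅ := by
    refine Set.eq_empty_of_subset_empty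
      ((faceOf_subset_convexHull fun _ _ => hf.sub_le_one).trans (convexHull_eq_empty.2 ?_).le)
    exact Set.eq_empty_of_forall_notMem fun _ ⟨i, j, hij, h, _⟩ => hnone ⟨i, j, hij, h⟩
  obtain ⟨i, j, hij⟩ : ∃ i j, G.Adj i j := by
    by_contra hno
    refine hne (hempty.trans ?_)
    rw [eq_comm, symEdgePolytope_eq_convexHull, convexHull_eq_empty]
    exact Set.eq_empty_of_forall_notMem fun _ ⟨i, j, hij, _⟩ => hno ⟨i, j, hij⟩
  set g : W → ℤ := Pi.single i 1
  have hgb : ∀ a b, G.Adj a b → g a - g b ≤ 1 :=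
    fun a b _ => by simp only [g, Pi.single_apply]; split_ifs <;> omega
  have htight : g i - g j = 1 := by simp [g, hij.ne.symm]
  have heq := hmax _ (isExposed_faceOf hgb) (faceOf_ne_symEdgePolytope hij htight)
    (hempty.trans_subset (Set.empty_subset _))
  have := (edgeVec_mem_faceOf_iff hij).2 htight
  rw [heq] at this
  exact hempty.subset this

theorem preconnected_facetSubgraph (hG : G.Preconnected) : (facetSubgraph G f).Preconnected := by
  classical
  intro u w
  by_contra huw
  set C : Set W := {k | (facetSubgraph G f).Reachable u k}
  have hside (i j : W) (h : (facetSubgraph G f).Adj i j) : i ∈ C ↔ j ∈ C :=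
    ⟨fun hi => hi.trans h.reachable, fun hj => hj.trans h.symm.reachable⟩
  obtain ⟨d, -, hdC, hdC'⟩ := (hG u w).some.exists_boundary_dart C (.refl u) huw
  have hcross (i j : W) (hij : G.Adj i j) (hmix : ¬(i ∈ C ↔ j ∈ C)) : f i = f j :=
    (eq_or_facetSubgraph_adj (fun _ _ => hf.sub_le_one) hij).resolve_right
      fun h => hmix (hside i j h)
  -- raising `f` by one on `C` keeps edge differences at most one and enlarges the face
  set g : W → ℤ := fun k => f k + if k ∈ C then 1 else 0
  have hgb (i j : W) (hij : G.Adj i j) : g i - g j ≤ 1 := by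
    have := hf.sub_le_one hij
    by_cases hmix : i ∈ C ↔ j ∈ C
    · simp only [g]; split_ifs <;> simp_all
    · have := hcross i j hij hmix
      simp only [g]; split_ifs <;> simp_all
  have htight (i j : W) (hij : G.Adj i j) (h : f i - f j = 1) : g i - g j = 1 := by
    have := hside i j ⟨hij, by rw [h]; rfl⟩
    simp only [g]; split_ifs <;> simp_all
  have hfd : f d.fst = f d.snd := hcross _ _ d.adj (by tauto)
  have hgd : g d.fst - g d.snd = 1 := by simp [g, hdC, hdC', hfd]
  have heq := hf.2.2.2 _ (isExposed_faceOf hgb) (faceOf_ne_symEdgePolytope d.adj hgd)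
    (faceOf_subset_faceOf (fun _ _ => hf.sub_le_one) htight)
  have := (edgeVec_mem_faceOf_iff d.adj).1 (heq ▸ (edgeVec_mem_faceOf_iff d.adj).2 hgd)
  rw [hfd, sub_self] at this
  exact zero_ne_one this

end DefinesFacet

end SymEdgePolytope

section SignPattern

variable {W : Type*} {G : SimpleGraph W} {V₂ : Set W} {p : W} {g : W → ℤ}

def IsSignPattern (V₂ : Set W) (p : W) (g : W → ℤ) : Prop :=
  ∀ x, (x ∈ V₂ → |g x - g p| = 1) ∧ (x ∉ V₂ → g x = g p)

theorem even_sub_iff_of_bipartite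
    (hbip : (facetSubgraph G g).IsBipartiteWith V₂ V₂ᶜ)
    (hconn : (facetSubgraph G g).Preconnected) (x y : W) :
    Even (g x - g y) ↔ (x ∈ V₂ ↔ y ∈ V₂) := by
  have hconst : (x ∈ V₂ ↔ Even (g x)) = (y ∈ V₂ ↔ Even (g y)) :=
    (hconn x y).apply_eq_of_forall_adj (φ := fun k => (k ∈ V₂ ↔ Even (g k))) fun u v huv => by
      have hodd : ¬Even (g u - g v) := by
        rcases (abs_eq zero_le_one).1 huv.2 with h | h <;> simp [h]
      rw [Int.even_sub] at hodd
      refine propext ?_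
      rcases hbip.mem_of_adj huv with h | h <;> simp only [Set.mem_compl_iff] at h <;> tauto
  rw [Int.even_sub]
  have := iff_of_eq hconst
  tauto

theorem isSignPattern_of_preconnected (hp : ∀ x, x ≠ p → G.Adj x p)
    (hb : ∀ i j, G.Adj i j → g i - g j ≤ 1) (hconn : (facetSubgraph G g).Preconnected)
    (hbip : (facetSubgraph G g).IsBipartiteWith V₂ V₂ᶜ)
    (hpV : p ∉ V₂) : IsSignPattern V₂ p g := by
  intro x
  by_cases hx : x = p
  · exact ⟨fun h => absurd (hx ▸ h) hpV, fun _ => hx ▸ rfl⟩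
  have h₁ := hb x p (hp x hx)
  have h₂ := hb p x (hp x hx).symm
  have hpar := even_sub_iff_of_bipartite hbip hconn x p
  simp only [hpV, iff_false, Int.even_iff] at hpar
  constructor <;> intro h <;> grind

theorem IsSignPattern.eq_of_adj (hs : IsSignPattern V₂ p g)
    (hb : ∀ i j, G.Adj i j → g i - g j ≤ 1) {x y : W} (hx : x ∈ V₂) (hy : y ∈ V₂)
    (hxy : G.Adj x y) : g x = g y := by
  have := hb x y hxy
  have := hb y x hxy.symm
  have := (hs x).1 hx
  have := (hs y).1 hy
  grind

theorem facetSubgraph_adj_iff_of_isSignPattern (hb : ∀ i j, G.Adj i j → g i - g j ≤ 1)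
    (hs : IsSignPattern V₂ p g) {x y : W} :
    (facetSubgraph G g).Adj x y ↔ G.Adj x y ∧ ¬(x ∈ V₂ ↔ y ∈ V₂) := by
  refine and_congr_right fun hxy => ?_
  have := hb x y hxy
  have := hb y x hxy.symm
  by_cases hx : x ∈ V₂ <;> by_cases hy : y ∈ V₂
  · simp [hs.eq_of_adj hb hx hy hxy, hx, hy]
  all_goals
    have := hs x
    have := hs y
    grind

end SignPattern

section Suspension

variable {V : Type*} {G : SimpleGraph V} {V₂ : Set (Option V)}

theorem suspension_adj_none {x : Option V} (hx : x ≠ none) : (suspension G).Adj x none := by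
  cases x
  exacts [absurd rfl hx, trivial]

theorem preconnected_suspension : (suspension G).Preconnected :=
  SimpleGraph.preconnected_of_forall_adj fun _ => suspension_adj_none

open Classical in
noncomputable def signFunctional (G : SimpleGraph V) (V₂ : Set (Option V))
    (σ : (G.induce {v | some v ∈ V₂}).ConnectedComponent → ℤˣ) : Option V → ℤ
  | none => 0
  | some v => if h : some v ∈ V₂ then σ ((G.induce _).connectedComponentMk ⟨v, h⟩) else 0

variable {σ : (G.induce {v | some v ∈ V₂}).ConnectedComponent → ℤˣ}

theorem isSignPattern_signFunctional (hapex : none ∉ V₂) :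
    IsSignPattern V₂ none (signFunctional G V₂ σ) := by
  rintro (_ | v)
  · exact ⟨fun h => absurd h hapex, fun _ => rfl⟩
  · by_cases h : some v ∈ V₂ <;>
      simp [signFunctional, h, Int.isUnit_iff_abs_eq.1 (Units.isUnit _)]

theorem signFunctional_sub_le_one (hapex : none ∉ V₂) {x y : Option V}
    (hxy : (suspension G).Adj x y) : signFunctional G V₂ σ x - signFunctional G V₂ σ y ≤ 1 := by
  have hs := isSignPattern_signFunctional (σ := σ) hapex
  by_cases hx : x ∈ V₂ <;> by_cases hy : y ∈ V₂
  · obtain ⟨u, rfl⟩ := Option.ne_none_iff_exists'.1 (ne_of_mem_of_not_mem hx hapex)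
    obtain ⟨v, rfl⟩ := Option.ne_none_iff_exists'.1 (ne_of_mem_of_not_mem hy hapex)
    have hadj : (G.induce {v | some v ∈ V₂}).Adj ⟨u, hx⟩ ⟨v, hy⟩ := hxy
    simp [signFunctional, hx, hy,
      SimpleGraph.ConnectedComponent.connectedComponentMk_eq_of_adj hadj]
  all_goals
    have := hs x
    have := hs y
    grind

theorem exists_eq_signFunctional_add {g : Option V → ℤ} (hs : IsSignPattern V₂ none g)
    (hb : ∀ x y, (suspension G).Adj x y → g x - g y ≤ 1) :
    ∃ σ, ∀ x, g x = signFunctional G V₂ σ x + g none := by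
  let u (v : {v | some v ∈ V₂}) : ℤˣ := (Int.isUnit_iff_abs_eq.2 ((hs (some v)).1 v.2)).unit
  have hu (a b : {v | some v ∈ V₂}) (hab : (G.induce {v | some v ∈ V₂}).Adj a b) : u a = u b :=
    Units.ext (by simp [u, hs.eq_of_adj hb a.2 b.2 hab])
  refine ⟨SimpleGraph.ConnectedComponent.lift u
    fun _ _ p _ => p.reachable.apply_eq_of_forall_adj hu, ?_⟩
  rintro (_ | v)
  · simp [signFunctional]
  · by_cases h : some v ∈ V₂
    · simp [signFunctional, h, u]
    · simp [signFunctional, h, (hs _).2 h]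

variable [Fintype V] [DecidableEq V]

theorem injective_faceOf_signFunctional :
    Function.Injective fun σ => faceOf (suspension G) (signFunctional G V₂ σ) := by
  intro σ τ h
  funext c
  induction c using SimpleGraph.ConnectedComponent.ind with | h v => ?_
  obtain ⟨v, hv⟩ := v
  have key (ρ : (G.induce {v | some v ∈ V₂}).ConnectedComponent → ℤˣ) :
      edgeVec (some v) none ∈ faceOf (suspension G) (signFunctional G V₂ ρ) ↔
        ρ ((G.induce _).connectedComponentMk ⟨v, hv⟩) = 1 := by
    rw [edgeVec_mem_faceOf_iff (suspension_adj_none (Option.some_ne_none _))]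
    simp [signFunctional, show some v ∈ V₂ from hv]
  have hστ := (key σ).symm.trans ((congrArg (edgeVec (some v) none ∈ ·) h).to_iff.trans (key τ))
  rcases Int.units_eq_one_or (σ ((G.induce _).connectedComponentMk ⟨v, hv⟩)) with h₁ | h₁ <;>
    rcases Int.units_eq_one_or (τ ((G.induce _).connectedComponentMk ⟨v, hv⟩)) with h₂ | h₂ <;>
    simp_all

variable {f : Option V → ℤ} (hf : DefinesFacet (suspension G) f)
  (hbip : (facetSubgraph (suspension G) f).IsBipartiteWith V₂ V₂ᶜ) (hapex : none ∉ V₂)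
include hf hbip hapex

theorem DefinesFacet.isSignPattern_of_suspension : IsSignPattern V₂ none f :=
  isSignPattern_of_preconnected (fun _ => suspension_adj_none) (fun _ _ => hf.sub_le_one)
    (hf.preconnected_facetSubgraph preconnected_suspension) hbip hapex

theorem exists_faceOf_signFunctional_eq :
    ∃ σ, faceOf (suspension G) (signFunctional G V₂ σ) = faceOf (suspension G) f := by
  obtain ⟨σ, hσ⟩ := exists_eq_signFunctional_add (hf.isSignPattern_of_suspension hbip hapex)
    fun _ _ => hf.sub_le_one
  exact ⟨σ, (faceOf_add_const _ (f none)).symm.trans (congrArg _ (funext hσ).symm)⟩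

theorem facetSubgraph_signFunctional (σ) :
    facetSubgraph (suspension G) (signFunctional G V₂ σ) = facetSubgraph (suspension G) f := by
  ext x y
  rw [facetSubgraph_adj_iff_of_isSignPattern (fun _ _ => signFunctional_sub_le_one hapex)
      (isSignPattern_signFunctional hapex),
    facetSubgraph_adj_iff_of_isSignPattern (fun _ _ => hf.sub_le_one)
      (hf.isSignPattern_of_suspension hbip hapex)]

theorem definesFacet_signFunctional (σ) : DefinesFacet (suspension G) (signFunctional G V₂ σ) := by
  have hfs := facetSubgraph_signFunctional hf hbip hapex σ
  obtain ⟨a, b, hab, h⟩ := hf.exists_sub_eq_one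
  refine definesFacet_of_preconnected (fun _ _ => signFunctional_sub_le_one hapex)
    (hfs ▸ hf.preconnected_facetSubgraph preconnected_suspension) (a := a) (b := b) ?_
  rw [hfs]
  exact ⟨hab, by rw [h]; rfl⟩

end Suspension

/-- Let `G` be a graph on `[n-1]` and `H` a facet subgraph of the
suspension `Ĝ` with bipartition `V₁ ⊔ V₂`, where the apex lies in `V₁`. Then
`μ(H) = 2^(c(G[V₂]))`, where `c(G[V₂])` is the number of connected components of the
induced subgraph of `G` on `V₂`. -/
theorem mu_eq_two_pow_components {V : Type*} [Fintype V] [DecidableEq V]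
    (G : SimpleGraph V) (H : SimpleGraph (Option V))
    (hH : H ∈ facetSubgraphs (suspension G)) (V₂ : Set (Option V)) (hapex : none ∉ V₂)
    (hbip : ∀ x y : Option V, H.Adj x y → ((x ∈ V₂ ∧ y ∉ V₂) ∨ (x ∉ V₂ ∧ y ∈ V₂))) :
    mu (suspension G) H =
      2 ^ Nat.card (G.induce {v : V | some v ∈ V₂}).ConnectedComponent := by
  obtain ⟨f₀, hf₀, rfl⟩ := hH
  have hbip₀ : (facetSubgraph (suspension G) f₀).IsBipartiteWith V₂ V₂ᶜ :=
    ⟨disjoint_compl_right, hbip⟩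
  have hset : {F | ∃ f, DefinesFacet (suspension G) f ∧ F = faceOf (suspension G) f ∧
      facetSubgraph (suspension G) f = facetSubgraph (suspension G) f₀}
        = Set.range fun σ => faceOf (suspension G) (signFunctional G V₂ σ) := by
    ext F
    constructor
    · rintro ⟨f, hf, rfl, hfH⟩
      exact exists_faceOf_signFunctional_eq hf (hfH ▸ hbip₀) hapex
    · rintro ⟨σ, rfl⟩
      exact ⟨_, definesFacet_signFunctional hf₀ hbip₀ hapex σ, rfl,
        facetSubgraph_signFunctional hf₀ hbip₀ hapex σ⟩
  calc mu (suspension G) (facetSubgraph (suspension G) f₀)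
      = (Set.range fun σ => faceOf (suspension G) (signFunctional G V₂ σ)).ncard :=
        congrArg Set.ncard hset
    _ = 2 ^ Nat.card (G.induce {v : V | some v ∈ V₂}).ConnectedComponent := by
      rw [Set.ncard_range_of_injective injective_faceOf_signFunctional, Nat.card_fun,
        Nat.card_eq_fintype_card (α := ℤˣ), Fintype.card_units_int]
end

section
/- Let G be a graph on the vertex set [n−1] with n ≥ 3, and let v be a vertex of G with N_G[v] ≠ [n−1]. Then N(P_{(G−v)^}) + N(P_{(G/v)^}) ≤ N(P_{Ĝ}) ≤ N(P_{(G−v)^}) + 2·N(P_{(G−N_G[v])^}) + N(P_{(G/v)^}), where (·)^ denotes suspension. -/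
open Finset

/-- The graph `G/v` obtained from `G` by deleting the vertex `v` and inserting all edges
`{i, j}` with `i, j ∈ N_G(v)`, `i ≠ j`. -/
def contractVertex {V : Type*} (G : SimpleGraph V) (v : V) : SimpleGraph {u : V // u ≠ v} where
  Adj a b := a ≠ b ∧ ((G.Adj a b) ∨ (G.Adj v a ∧ G.Adj v b))
  symm := by
    constructor
    rintro a b ⟨hab, h⟩
    exact ⟨hab.symm, h.imp (fun h' => h'.symm) (fun h' => ⟨h'.2, h'.1⟩)⟩
  loopless := ⟨fun a h => h.1 rfl⟩


/-!
The facets of `P_Ĝ` are counted by labelings of `V(G)` by `-1`, `0`, `1` (`IsFacetLabeling`): a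
facet normal can be normalised to vanish at the apex and to take the value `1` on the facet, and it
is then integral because the edges on which it is tight connect all vertices of `Ĝ`. A facet
normal is obtained from any supporting functional by rounding its potential up and relabelling by
`1` the zeros whose neighbours are all `0`.

Once facets are counted by labelings, both inequalities are injections. Extending labelings of
`G − v` (by `0`, or by `1` if all neighbours of `v` are labelled `0`) and of `G / v` (by `1` if a
neighbour of `v` is labelled `1`, and by `-1` otherwise) gives disjoint families of labelings of
`G`. Conversely, a labeling of `G` restricts to one of `G − v` if `β v = 0`, to one of `G − N[v]`
if `β v = ±1` and `β` vanishes on `N(v)`, and otherwise to one of `G / v`, from which `β v` is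
recovered as the label of any neighbour with nonzero label.
-/

section Convex

variable {𝕜 E L : Type*} [Field 𝕜] [LinearOrder 𝕜] [AddCommGroup E] [FunLike L E 𝕜]
  {A S : Set E} {m : 𝕜} {x : E}

theorem pos_of_setOf_eq_ne [IsStrictOrderedRing 𝕜] [AddMonoidHomClass L E 𝕜] {l : L}
    (hA : ∀ x ∈ A, -x ∈ A) (hle : ∀ x ∈ A, l x ≤ m)
    (hne : {x ∈ A | l x = m} ≠ A) : 0 < m := by
  by_contra! hm
  refine hne (Set.ext fun x => ⟨And.left, fun hx => ⟨hx, ?_⟩⟩)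
  have := hle (-x) (hA x hx)
  rw [map_neg] at this
  linarith [hle x hx]

variable [Module 𝕜 E]

theorem le_of_mem_convexHull_of_forall_le [IsStrictOrderedRing 𝕜] [LinearMapClass L 𝕜 E 𝕜]
    {l : L} (hS : ∀ s ∈ S, l s ≤ m) (hx : x ∈ convexHull 𝕜 S) : l x ≤ m :=
  convexHull_min hS (convex_halfSpace_le ⟨map_add l, map_smul l⟩ m) hx

theorem eqOn_convexHull [IsStrictOrderedRing 𝕜] {F : Type*} [AddCommGroup F] [Module 𝕜 F]
    {f g : E →ₗ[𝕜] F} (h : Set.EqOn f g S) : Set.EqOn f g (convexHull 𝕜 S) :=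
  fun _ hx => convexHull_min h (LinearMap.eqLocus f g).convex hx

theorem mem_convexHull_setOf_eq [IsStrictOrderedRing 𝕜] [LinearMapClass L 𝕜 E 𝕜] {l : L}
    (hS : ∀ s ∈ S, l s ≤ m) (hx : x ∈ convexHull 𝕜 S) (hxm : l x = m) :
    x ∈ convexHull 𝕜 {s ∈ S | l s = m} := by
  classical
  obtain ⟨ι, _, w, z, hw₀, hw₁, hz, rfl⟩ := mem_convexHull_iff_exists_fintype.mp hx
  have hslack : ∑ i, w i * (m - l (z i)) = 0 := by
    simp only [mul_sub, Finset.sum_sub_distrib, ← Finset.sum_mul, hw₁, one_mul, ← hxm,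
      map_sum, map_smul, smul_eq_mul, sub_self]
  have htight : ∀ i, w i ≠ 0 → l (z i) = m := fun i hi => by
    have := (Finset.sum_eq_zero_iff_of_nonneg fun j _ =>
      mul_nonneg (hw₀ j) (sub_nonneg.2 (hS _ (hz j)))).1 hslack i (Finset.mem_univ i)
    linarith [(mul_eq_zero.1 this).resolve_left hi]
  rw [← Finset.sum_filter_of_ne (p := fun i => w i ≠ 0) fun i _ h => left_ne_zero_of_smul h]
  exact (convex_convexHull 𝕜 _).sum_mem (fun i _ => hw₀ i)
    (by rw [Finset.sum_filter_ne_zero, hw₁])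
    fun i hi => subset_convexHull 𝕜 _ ⟨hz i, htight i (Finset.mem_filter.1 hi).2⟩

variable [TopologicalSpace 𝕜] [TopologicalSpace E]

theorem isExposed_setOf_eq {l : StrongDual 𝕜 E} (hle : ∀ x ∈ A, l x ≤ m) :
    IsExposed 𝕜 A {x ∈ A | l x = m} := by
  rintro ⟨x₀, hx₀, rfl⟩
  exact ⟨l, Set.ext fun x => ⟨fun hx => ⟨hx.1, fun y hy => hx.2 ▸ hle y hy⟩,
    fun hx => ⟨hx.1, le_antisymm (hle x hx.1) (hx.2 x₀ hx₀)⟩⟩⟩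

theorem IsExposed.exists_eq_setOf_eq {B : Set E} (hB : IsExposed 𝕜 A B) (hx : x ∈ B) :
    ∃ l : StrongDual 𝕜 E, (∀ y ∈ A, l y ≤ l x) ∧ B = {y ∈ A | l y = l x} := by
  obtain ⟨l, rfl⟩ := hB ⟨x, hx⟩
  exact ⟨l, hx.2, Set.ext fun y =>
    ⟨fun hy => ⟨hy.1, le_antisymm (hx.2 y hy.1) (hy.2 x hx.1)⟩,
    fun hy => ⟨hy.1, fun z hz => hy.2 ▸ hx.2 z hz⟩⟩⟩

end Convex

theorem IsFacet.eq_of_subset {V : Type*} {P F F' : Set (V → ℝ)} (hF : IsFacet P F)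
    (hF' : IsFacet P F') (h : F ⊆ F') : F' = F :=
  hF.2.2 F' hF'.1 hF'.2.1 h

section EdgeVectors

variable {V : Type*} [DecidableEq V] {G : SimpleGraph V} {x : V → ℝ}

def edgeVectors (G : SimpleGraph V) : Set (V → ℝ) :=
  {x | ∃ i j, G.Adj i j ∧ x = Pi.single i 1 - Pi.single j 1}

theorem symEdgePolytope_eq_convexHull_s11 (G : SimpleGraph V) :
    symEdgePolytope G = convexHull ℝ (edgeVectors G) := by
  unfold symEdgePolytope edgeVectors
  congr 1
  ext x
  simp only [Set.mem_ofPred_eq, funext_iff, Pi.sub_apply, Pi.single_apply]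

theorem edgeVector_mem_symEdgePolytope {i j : V} (hij : G.Adj i j) :
    Pi.single i 1 - Pi.single j 1 ∈ symEdgePolytope G := by
  rw [symEdgePolytope_eq_convexHull_s11]
  exact subset_convexHull ℝ _ ⟨i, j, hij, rfl⟩

theorem neg_mem_edgeVectors (hx : x ∈ edgeVectors G) : -x ∈ edgeVectors G := by
  obtain ⟨i, j, hij, rfl⟩ := hx
  exact ⟨j, i, hij.symm, neg_sub _ _⟩

theorem neg_mem_symEdgePolytope (hx : x ∈ symEdgePolytope G) : -x ∈ symEdgePolytope G := by
  rw [symEdgePolytope_eq_convexHull_s11] at hx ⊢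
  refine convexHull_mono (fun y hy => ?_) (convexHull_neg (𝕜 := ℝ) (edgeVectors G) ▸
    Set.neg_mem_neg.2 hx)
  simpa using neg_mem_edgeVectors (Set.mem_neg.1 hy)

end EdgeVectors

section Labelings

variable {V : Type*} {G : SimpleGraph V} {β : V → ℤ} {u v w : V}

/-- `β` is a facet normal of `P_Ĝ` normalised to vanish at the apex: the last two conditions say
that the edges of `Ĝ` on which it is tight connect all vertices. -/
structure IsFacetLabeling (G : SimpleGraph V) (β : V → ℤ) : Prop where
  abs_le_one : ∀ u, |β u| ≤ 1
  abs_sub_le_one : ∀ ⦃u w⦄, G.Adj u w → |β u - β w| ≤ 1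
  ne_zero : β ≠ 0
  exists_adj_ne_zero : ∀ ⦃u⦄, β u = 0 → ∃ w, G.Adj u w ∧ β w ≠ 0

namespace IsFacetLabeling

theorem eq_neg_one_or_eq_one (hβ : IsFacetLabeling G β) (hu : β u ≠ 0) :
    β u = -1 ∨ β u = 1 := by
  have := abs_le.1 (hβ.abs_le_one u)
  omega

theorem eq_zero_or_eq_of_adj (hβ : IsFacetLabeling G β) (hv : β v ≠ 0) (hvw : G.Adj v w) :
    β w = 0 ∨ β w = β v := by
  have := abs_le.1 (hβ.abs_le_one w)
  have := abs_le.1 (hβ.abs_sub_le_one hvw)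
  have := hβ.eq_neg_one_or_eq_one hv
  omega

theorem induce {s : Set V} (hβ : IsFacetLabeling G β) (hs : s.Nonempty)
    (hβs : ∀ ⦃u w⦄, u ∈ s → w ∉ s → G.Adj u w → β w = 0) :
    IsFacetLabeling (G.induce s) (s.domRestrict β) where
  abs_le_one u := hβ.abs_le_one u
  abs_sub_le_one _ _ h := hβ.abs_sub_le_one h
  exists_adj_ne_zero u hu := by
    obtain ⟨w, huw, hw⟩ := hβ.exists_adj_ne_zero hu
    exact ⟨⟨w, by_contra fun hws => hw (hβs u.2 hws huw)⟩, huw, hw⟩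
  ne_zero h := by
    obtain ⟨u, hu⟩ := hs
    have hu0 : β u = 0 := congrFun h ⟨u, hu⟩
    obtain ⟨w, huw, hw⟩ := hβ.exists_adj_ne_zero hu0
    exact hw (congrFun h ⟨w, by_contra fun hws => hw (hβs hu hws huw)⟩)

theorem restrict_contractVertex (hβ : IsFacetLabeling G β) (hv : β v ≠ 0) (hvw : G.Adj v w)
    (hw : β w ≠ 0) : IsFacetLabeling (contractVertex G v) fun u => β u where
  abs_le_one u := hβ.abs_le_one u
  abs_sub_le_one := by
    rintro a b ⟨-, hab | ⟨hva, hvb⟩⟩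
    · exact hβ.abs_sub_le_one hab
    · have := hβ.eq_zero_or_eq_of_adj hv hva
      have := hβ.eq_zero_or_eq_of_adj hv hvb
      have := abs_le.1 (hβ.abs_le_one v)
      rw [abs_le]
      omega
  ne_zero h := hw (congrFun h ⟨w, hvw.ne'⟩)
  exists_adj_ne_zero := by
    intro a ha
    obtain ⟨b, hab, hb⟩ := hβ.exists_adj_ne_zero ha
    by_cases hbv : b = v
    · subst hbv
      refine ⟨⟨w, hvw.ne'⟩, ⟨fun h => hw ?_, Or.inr ⟨hab.symm, hvw⟩⟩, hw⟩
      rwa [h] at ha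
    · exact ⟨⟨b, hbv⟩, ⟨fun h => hab.ne (congrArg Subtype.val h), Or.inl hab⟩, hb⟩

end IsFacetLabeling

theorem finite_setOf_isFacetLabeling [Finite V] (G : SimpleGraph V) :
    {β | IsFacetLabeling G β}.Finite :=
  (Set.Finite.pi' fun _ => Set.finite_Icc (-1 : ℤ) 1).subset fun _ hβ u =>
    Set.mem_Icc.2 (abs_le.1 (hβ.abs_le_one u))

end Labelings

section SuspensionFacets

variable {W : Type*} {H : SimpleGraph W} {β : W → ℤ}

def withApex (β : W → ℤ) : Option W → ℤ := fun o => o.elim 0 β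

@[simp] theorem withApex_none : withApex β none = 0 := rfl

@[simp] theorem withApex_some (u : W) : withApex β (some u) = β u := rfl

theorem forall_withApex_sub_le_one_iff :
    (∀ i j, (suspension H).Adj i j → withApex β i - withApex β j ≤ 1) ↔
      (∀ u, |β u| ≤ 1) ∧ ∀ ⦃u w⦄, H.Adj u w → |β u - β w| ≤ 1 := by
  refine ⟨fun h => ⟨fun u => abs_le.2 ⟨?_, ?_⟩, fun u w huw => abs_le.2 ⟨?_, ?_⟩⟩,
    ?_⟩
  · linarith [show _ from by simpa using h none (some u) trivial]
  · simpa using h (some u) none trivial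
  · linarith [show _ from by simpa using h (some w) (some u) huw.symm]
  · simpa using h (some u) (some w) huw
  · rintro ⟨h, h'⟩ (_ | u) (_ | w) huw
    · simp at huw
    · simp only [withApex_none, withApex_some]
      linarith [(abs_le.1 (h w)).1]
    · simpa using (abs_le.1 (h u)).2
    · exact (abs_le.1 (h' huw)).2

theorem IsFacetLabeling.exists_tight (hβ : IsFacetLabeling H β) :
    ∃ i j, (suspension H).Adj i j ∧ withApex β i - withApex β j = 1 := by
  obtain ⟨u, hu⟩ := Function.ne_iff.1 hβ.ne_zero
  rcases hβ.eq_neg_one_or_eq_one hu with h | h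
  · exact ⟨none, some u, trivial, by simp [h]⟩
  · exact ⟨some u, none, trivial, by simp [h]⟩

/-- The tight edges of `β` join every vertex of `Ĥ` to the apex by a path of length at most
two. -/
theorem IsFacetLabeling.potential_eq (hβ : IsFacetLabeling H β) {γ : Option W → ℝ} {m : ℝ}
    (hγ : ∀ i j, (suspension H).Adj i j → withApex β i - withApex β j = 1 →
      γ i - γ j = m) (o : Option W) : γ o = γ none + m * withApex β o := by
  have hne : ∀ u, β u ≠ 0 → γ (some u) = γ none + m * β u := fun u hu => by
    rcases hβ.eq_neg_one_or_eq_one hu with h | h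
    · have := hγ none (some u) trivial (by simp [h])
      simp only [h]
      push_cast
      linarith
    · have := hγ (some u) none trivial (by simp [h])
      simp only [h]
      push_cast
      linarith
  rcases o with _ | u
  · simp
  by_cases hu : β u = 0
  · obtain ⟨w, huw, hw⟩ := hβ.exists_adj_ne_zero hu
    have hγw := hne w hw
    simp only [withApex_some, hu, Int.cast_zero, mul_zero, add_zero]
    rcases hβ.eq_neg_one_or_eq_one hw with h | h <;> rw [h] at hγw <;> push_cast at hγw
    · linarith [hγ (some u) (some w) huw (by simp [h, hu])]
    · linarith [hγ (some w) (some u) huw.symm (by simp [h, hu])]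
  · simpa using hne u hu

open Classical in
noncomputable def raiseIsolatedZeros (H : SimpleGraph W) (β : W → ℤ) : W → ℤ :=
  fun u => if β u = 0 ∧ ∀ w, H.Adj u w → β w = 0 then 1 else β u

theorem raiseIsolatedZeros_of_not {u : W} (hu : ¬(β u = 0 ∧ ∀ w, H.Adj u w → β w = 0)) :
    raiseIsolatedZeros H β u = β u :=
  if_neg hu

theorem raiseIsolatedZeros_of_isolated {u : W} (hu : β u = 0 ∧ ∀ w, H.Adj u w → β w = 0) :
    raiseIsolatedZeros H β u = 1 :=
  if_pos hu

theorem isFacetLabeling_raiseIsolatedZeros (habs : ∀ u, |β u| ≤ 1)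
    (hlip : ∀ ⦃u w⦄, H.Adj u w → |β u - β w| ≤ 1) (hne : β ≠ 0) :
    IsFacetLabeling H (raiseIsolatedZeros H β) where
  abs_le_one u := by
    by_cases hu : β u = 0 ∧ ∀ w, H.Adj u w → β w = 0
    · simp [raiseIsolatedZeros_of_isolated hu]
    · simpa [raiseIsolatedZeros_of_not hu] using habs u
  abs_sub_le_one u w huw := by
    by_cases hu : β u = 0 ∧ ∀ w, H.Adj u w → β w = 0 <;>
      by_cases hw : β w = 0 ∧ ∀ u, H.Adj w u → β u = 0
    · simp [raiseIsolatedZeros_of_isolated hu, raiseIsolatedZeros_of_isolated hw]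
    · simp [raiseIsolatedZeros_of_isolated hu, raiseIsolatedZeros_of_not hw, hu.2 w huw]
    · simp [raiseIsolatedZeros_of_not hu, raiseIsolatedZeros_of_isolated hw, hw.2 u huw.symm]
    · simpa [raiseIsolatedZeros_of_not hu, raiseIsolatedZeros_of_not hw] using hlip huw
  ne_zero h := hne <| funext fun u => by
    by_cases hu : β u = 0 ∧ ∀ w, H.Adj u w → β w = 0
    · exact hu.1
    · simpa [raiseIsolatedZeros_of_not hu] using congrFun h u
  exists_adj_ne_zero u hu := by
    have hu' : ¬(β u = 0 ∧ ∀ w, H.Adj u w → β w = 0) := fun h' => by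
      simp [raiseIsolatedZeros_of_isolated h'] at hu
    rw [raiseIsolatedZeros_of_not hu'] at hu
    obtain ⟨w, huw, hw⟩ : ∃ w, H.Adj u w ∧ β w ≠ 0 := by simpa [hu] using hu'
    exact ⟨w, huw, by rwa [raiseIsolatedZeros_of_not fun h' => hw h'.1]⟩

theorem withApex_raiseIsolatedZeros_sub_eq_one {i j : Option W} (hij : (suspension H).Adj i j)
    (h : withApex β i - withApex β j = 1) :
    withApex (raiseIsolatedZeros H β) i - withApex (raiseIsolatedZeros H β) j = 1 := by
  have hkeep : ∀ o o', (suspension H).Adj o o' → withApex β o ≠ withApex β o' →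
      withApex (raiseIsolatedZeros H β) o = withApex β o := by
    rintro (_ | u) o' hoo' hdiff
    · rfl
    refine raiseIsolatedZeros_of_not fun hu => hdiff ?_
    rcases o' with _ | w
    · simp [hu.1]
    · simp [hu.1, hu.2 w hoo']
  rwa [hkeep i j hij (by omega), hkeep j i hij.symm (by omega)]

theorem exists_isFacetLabeling_of_potential {γ : Option W → ℝ} {m : ℝ} (hm : 0 < m)
    (hle : ∀ i j, (suspension H).Adj i j → γ i - γ j ≤ m)
    (htight : ∃ i j, (suspension H).Adj i j ∧ γ i - γ j = m) :
    ∃ β, IsFacetLabeling H β ∧ ∀ i j, (suspension H).Adj i j → γ i - γ j = m →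
      withApex β i - withApex β j = 1 := by
  set δ : Option W → ℝ := fun o => (γ o - γ none) / m
  set β₀ : W → ℤ := fun u => ⌈δ (some u)⌉
  have hβ₀ : ∀ o, withApex β₀ o = ⌈δ o⌉ := by rintro (_ | u) <;> simp [β₀, δ]
  have hδ : ∀ i j, δ i - δ j = (γ i - γ j) / m := fun i j => by simp only [δ]; ring
  have htight₀ : ∀ i j, (suspension H).Adj i j → γ i - γ j = m →
      withApex β₀ i - withApex β₀ j = 1 := fun i j _ h => by
    have : δ i = δ j + 1 := by rw [← sub_eq_iff_eq_add', hδ, h, div_self hm.ne']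
    simp [hβ₀, this, Int.ceil_add_one]
  have hlip₀ : ∀ i j, (suspension H).Adj i j → withApex β₀ i - withApex β₀ j ≤ 1 :=
      fun i j hij => by
    have : δ i ≤ δ j + 1 := by linarith [hδ i j, (div_le_one hm).2 (hle i j hij)]
    have := Int.ceil_mono this
    rw [Int.ceil_add_one, ← hβ₀, ← hβ₀] at this
    omega
  have hne : β₀ ≠ 0 := fun h0 => by
    obtain ⟨i, j, hij, h⟩ := htight
    have := htight₀ i j hij h
    rw [h0] at this
    rcases i with _ | _ <;> rcases j with _ | _ <;> simp [withApex] at this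
  obtain ⟨habs, hlip⟩ := forall_withApex_sub_le_one_iff.1 hlip₀
  exact ⟨raiseIsolatedZeros H β₀, isFacetLabeling_raiseIsolatedZeros habs hlip hne,
    fun i j hij h => withApex_raiseIsolatedZeros_sub_eq_one hij (htight₀ i j hij h)⟩

variable [Fintype W] [DecidableEq W]

noncomputable def labelingFunctional (β : W → ℤ) : StrongDual ℝ (Option W → ℝ) :=
  ∑ u, (β u : ℝ) • ContinuousLinearMap.proj (some u)

theorem labelingFunctional_single (β : W → ℤ) (o : Option W) :
    labelingFunctional β (Pi.single o 1) = withApex β o := by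
  rcases o with _ | u <;> simp [labelingFunctional, Pi.single_apply]

def labelingFace (H : SimpleGraph W) (β : W → ℤ) : Set (Option W → ℝ) :=
  {x ∈ symEdgePolytope (suspension H) | labelingFunctional β x = 1}

theorem IsFacetLabeling.labelingFunctional_le_one (hβ : IsFacetLabeling H β)
    {x : Option W → ℝ} (hx : x ∈ symEdgePolytope (suspension H)) :
    labelingFunctional β x ≤ 1 := by
  rw [symEdgePolytope_eq_convexHull_s11] at hx
  refine le_of_mem_convexHull_of_forall_le ?_ hx
  rintro _ ⟨i, j, hij, rfl⟩
  have := forall_withApex_sub_le_one_iff.2 ⟨hβ.abs_le_one, hβ.abs_sub_le_one⟩ i j hij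
  simp only [map_sub, labelingFunctional_single]
  exact_mod_cast this

theorem edgeVector_mem_labelingFace_iff {i j : Option W} (hij : (suspension H).Adj i j) :
    Pi.single i 1 - Pi.single j 1 ∈ labelingFace H β ↔ withApex β i - withApex β j = 1 := by
  simp only [labelingFace, Set.mem_sep_iff, edgeVector_mem_symEdgePolytope hij, true_and, map_sub,
    labelingFunctional_single]
  norm_cast

theorem IsFacetLabeling.labelingFace_nonempty (hβ : IsFacetLabeling H β) :
    (labelingFace H β).Nonempty :=
  let ⟨_, _, hij, h⟩ := hβ.exists_tight
  ⟨_, (edgeVector_mem_labelingFace_iff hij).2 h⟩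

theorem IsFacetLabeling.isFacet_labelingFace (hβ : IsFacetLabeling H β) :
    IsFacet (symEdgePolytope (suspension H)) (labelingFace H β) := by
  obtain ⟨x₀, hx₀⟩ := hβ.labelingFace_nonempty
  refine ⟨isExposed_setOf_eq fun x hx => hβ.labelingFunctional_le_one hx, fun h => ?_,
    fun F hF hFP hsub => ?_⟩
  · have := (h ▸ neg_mem_symEdgePolytope hx₀.1 : -x₀ ∈ labelingFace H β).2
    rw [map_neg, hx₀.2] at this
    norm_num at this
  obtain ⟨l, hle, rfl⟩ := hF.exists_eq_setOf_eq (hsub hx₀)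
  have hm : 0 < l x₀ := pos_of_setOf_eq_ne
    (fun _ hx => neg_mem_symEdgePolytope hx) hle hFP
  have hpot := hβ.potential_eq (γ := fun o => l (Pi.single o 1)) (m := l x₀) fun i j hij h => by
    simpa using (hsub ((edgeVector_mem_labelingFace_iff hij).2 h)).2
  have hl : ∀ x ∈ symEdgePolytope (suspension H), l x = l x₀ * labelingFunctional β x := by
    rw [symEdgePolytope_eq_convexHull_s11]
    refine eqOn_convexHull (f := (l : (Option W → ℝ) →ₗ[ℝ] ℝ))
      (g := l x₀ • (labelingFunctional β : (Option W → ℝ) →ₗ[ℝ] ℝ)) ?_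
    rintro _ ⟨i, j, hij, rfl⟩
    simp only [ContinuousLinearMap.coe_coe, LinearMap.smul_apply, map_sub,
      labelingFunctional_single, smul_eq_mul]
    rw [hpot i, hpot j]
    ring
  refine Set.Subset.antisymm (fun x hx => ⟨hx.1, ?_⟩) hsub
  have := hx.2
  rw [hl x hx.1] at this
  exact mul_left_cancel₀ hm.ne' (this.trans (mul_one _).symm)

theorem IsFacet.nonempty {F : Set (Option W → ℝ)}
    (hF : IsFacet (symEdgePolytope (suspension H)) F) : F.Nonempty := by
  refine Set.nonempty_iff_ne_empty.2 fun hF0 => ?_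
  rcases isEmpty_or_nonempty W with hW | ⟨⟨u⟩⟩
  · refine hF.2.1 (hF0.trans (Eq.symm ?_))
    rw [symEdgePolytope_eq_convexHull_s11, convexHull_eq_empty, Set.eq_empty_iff_forall_notMem]
    rintro _ ⟨i, j, hij, -⟩
    exact hij.ne (Subsingleton.elim i j)
  · have h1 : IsFacetLabeling H 1 := ⟨fun _ => by simp, fun _ _ _ => by simp,
      fun h => one_ne_zero (congrFun h u), fun _ h => absurd h one_ne_zero⟩
    have := hF.eq_of_subset h1.isFacet_labelingFace (hF0 ▸ Set.empty_subset _)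
    exact h1.labelingFace_nonempty.ne_empty (this.trans hF0)

theorem IsFacet.exists_eq_labelingFace {F : Set (Option W → ℝ)}
    (hF : IsFacet (symEdgePolytope (suspension H)) F) :
    ∃ β, IsFacetLabeling H β ∧ labelingFace H β = F := by
  obtain ⟨x₀, hx₀⟩ := hF.nonempty
  obtain ⟨l, hle, rfl⟩ := hF.1.exists_eq_setOf_eq hx₀
  have hm : 0 < l x₀ := pos_of_setOf_eq_ne
    (fun _ hx => neg_mem_symEdgePolytope hx) hle hF.2.1
  have hS : ∀ s ∈ edgeVectors (suspension H), l s ≤ l x₀ := fun s ⟨i, j, hij, hs⟩ =>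
    hle s (hs ▸ edgeVector_mem_symEdgePolytope hij)
  have hspan : ∀ x ∈ {y ∈ symEdgePolytope (suspension H) | l y = l x₀},
      x ∈ convexHull ℝ {s ∈ edgeVectors (suspension H) | l s = l x₀} := fun x hx =>
    mem_convexHull_setOf_eq hS
      (symEdgePolytope_eq_convexHull_s11 (suspension H) ▸ hx.1) hx.2
  obtain ⟨_, ⟨i, j, hij, rfl⟩, hl⟩ := convexHull_nonempty_iff.1 ⟨x₀, hspan x₀ hx₀⟩
  obtain ⟨β, hβ, htight⟩ := exists_isFacetLabeling_of_potential
    (γ := fun o => l (Pi.single o 1)) hm (fun i j hij => by simpa using hS _ ⟨i, j, hij, rfl⟩)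
    ⟨i, j, hij, by simpa using hl⟩
  refine ⟨β, hβ, hF.eq_of_subset hβ.isFacet_labelingFace fun x hx => ⟨hx.1, ?_⟩⟩
  refine convexHull_min ?_ (convex_hyperplane (labelingFunctional β).toLinearMap.isLinear 1)
    (hspan x hx)
  rintro _ ⟨⟨i, j, hij, rfl⟩, hl⟩
  simpa [labelingFunctional_single] using
    congrArg (Int.cast : ℤ → ℝ) (htight i j hij (by simpa using hl))

theorem injOn_labelingFace : Set.InjOn (labelingFace H) {β | IsFacetLabeling H β} := by
  intro β hβ β' hβ' h
  have key : ∀ i j, (suspension H).Adj i j →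
      (withApex β i - withApex β j = 1 ↔ withApex β' i - withApex β' j = 1) :=
      fun i j hij => by
    rw [← edgeVector_mem_labelingFace_iff hij, ← edgeVector_mem_labelingFace_iff hij, h]
  funext u
  have h₁ := key (some u) none trivial
  have h₂ := key none (some u) trivial
  simp only [withApex_some, withApex_none, sub_zero, zero_sub] at h₁ h₂
  have := abs_le.1 (hβ.abs_le_one u)
  have := abs_le.1 (hβ'.abs_le_one u)
  omega

end SuspensionFacets

theorem numFacets_symEdgePolytope_suspension {W : Type*} [Finite W] [DecidableEq W]
    (H : SimpleGraph W) :
    numFacets (symEdgePolytope (suspension H)) = {β | IsFacetLabeling H β}.ncard := by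
  cases nonempty_fintype W
  have : {F | IsFacet (symEdgePolytope (suspension H)) F} =
      labelingFace H '' {β | IsFacetLabeling H β} :=
    Set.ext fun F => ⟨fun hF => hF.exists_eq_labelingFace, by
      rintro ⟨β, hβ, rfl⟩
      exact hβ.isFacet_labelingFace⟩
  rw [numFacets, this, injOn_labelingFace.ncard_image]

section DeletionContraction

variable {V : Type*} {G : SimpleGraph V} {v : V}

theorem ncard_add_ncard_le_of_injOn {α β γ : Type*} {s : Set α} {t : Set β} {u : Set γ}
    {f : α → γ} {g : β → γ} (hf : Set.MapsTo f s u) (hg : Set.MapsTo g t u)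
    (hfi : Set.InjOn f s) (hgi : Set.InjOn g t) (hfg : ∀ a ∈ s, ∀ b ∈ t, f a ≠ g b)
    (hu : u.Finite) :
    s.ncard + t.ncard ≤ u.ncard := by
  have hdisj : Disjoint (f '' s) (g '' t) := Set.disjoint_left.2 <| by
    rintro _ ⟨a, ha, rfl⟩ ⟨b, hb, hab⟩
    exact hfg a ha b hb hab.symm
  rw [← hfi.ncard_image, ← hgi.ncard_image,
    ← Set.ncard_union_eq hdisj (hu.subset hf.image_subset) (hu.subset hg.image_subset)]
  exact Set.ncard_le_ncard (Set.union_subset hf.image_subset hg.image_subset) hu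

theorem eqOn_pi_single_of_forall_adj_eq_zero [DecidableEq V] {β : V → ℤ}
    (hβ : ∀ w, G.Adj v w → β w = 0) :
    Set.EqOn β (Pi.single v (β v)) {u | ¬(u = v ∨ G.Adj v u)}ᶜ := by
  intro u hu
  rcases not_not.1 hu with rfl | hvu
  · simp
  · simp [hβ u hvu, hvu.ne']

variable [DecidableEq V] {c : ℤ} {β : {u // u ≠ v} → ℤ}

def extendAt (v : V) (c : ℤ) (β : {u // u ≠ v} → ℤ) : V → ℤ :=
  fun u => if h : u = v then c else β ⟨u, h⟩

@[simp] theorem extendAt_self : extendAt v c β v = c := dif_pos rfl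

theorem extendAt_of_ne {u : V} (h : u ≠ v) : extendAt v c β u = β ⟨u, h⟩ := dif_neg h

@[simp] theorem extendAt_coe (u : {u // u ≠ v}) : extendAt v c β u = β u := dif_neg u.2

theorem eq_of_extendAt_eq {c' : ℤ} {β' : {u // u ≠ v} → ℤ}
    (h : extendAt v c β = extendAt v c' β') : β = β' :=
  funext fun u => by simpa using congrFun h u

theorem isFacetLabeling_extendAt {H : SimpleGraph {u // u ≠ v}} (hβ : IsFacetLabeling H β)
    (hGH : ∀ a b : {u // u ≠ v}, G.Adj a b → H.Adj a b) (hc : |c| ≤ 1)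
    (hcβ : ∀ a : {u // u ≠ v}, G.Adj v a → |c - β a| ≤ 1)
    (hzero : ∀ ⦃u⦄, extendAt v c β u = 0 → ∃ w, G.Adj u w ∧ extendAt v c β w ≠ 0) :
    IsFacetLabeling G (extendAt v c β) where
  abs_le_one u := by
    by_cases hu : u = v
    · simpa [hu] using hc
    · simpa [extendAt_of_ne hu] using hβ.abs_le_one ⟨u, hu⟩
  abs_sub_le_one a b hab := by
    by_cases ha : a = v
    · subst ha
      simpa [extendAt_of_ne hab.ne'] using hcβ ⟨b, hab.ne'⟩ hab
    by_cases hb : b = v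
    · subst hb
      simpa [extendAt_of_ne hab.ne, abs_sub_comm] using hcβ ⟨a, hab.ne⟩ hab.symm
    simpa [extendAt_of_ne ha, extendAt_of_ne hb] using
      hβ.abs_sub_le_one (hGH ⟨a, ha⟩ ⟨b, hb⟩ hab)
  ne_zero h := hβ.ne_zero (funext fun u => by simpa using congrFun h u)
  exists_adj_ne_zero := hzero

theorem isFacetLabeling_extendAt_of_induce (hβ : IsFacetLabeling (G.induce {u | u ≠ v}) β)
    (hc : (c = 0 ∧ ∃ w : {u // u ≠ v}, G.Adj v w ∧ β w ≠ 0) ∨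
      (c = 1 ∧ ∀ w : {u // u ≠ v}, G.Adj v w → β w = 0)) :
    IsFacetLabeling G (extendAt v c β) := by
  refine isFacetLabeling_extendAt hβ (fun _ _ h => h)
    (by rcases hc with ⟨rfl, -⟩ | ⟨rfl, -⟩ <;> simp) (fun a hva => ?_) fun u hu => ?_
  · rcases hc with ⟨rfl, -⟩ | ⟨rfl, hc⟩
    · simpa using hβ.abs_le_one a
    · simp [hc a hva]
  · by_cases huv : u = v
    · subst huv
      rcases hc with ⟨-, w, hvw, hw⟩ | ⟨rfl, -⟩
      · exact ⟨w, hvw, by simpa using hw⟩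
      · simp at hu
    · rw [extendAt_of_ne huv] at hu
      obtain ⟨w, huw, hw⟩ := hβ.exists_adj_ne_zero hu
      exact ⟨w, huw, by simpa using hw⟩

theorem isFacetLabeling_extendAt_of_contractVertex (hβ : IsFacetLabeling (contractVertex G v) β)
    (hc : (c = 1 ∧ ∃ w : {u // u ≠ v}, G.Adj v w ∧ β w = 1) ∨
      (c = -1 ∧ ∀ w : {u // u ≠ v}, G.Adj v w → β w ≠ 1)) :
    IsFacetLabeling G (extendAt v c β) := by
  have hc0 : c ≠ 0 := by rcases hc with ⟨rfl, -⟩ | ⟨rfl, -⟩ <;> simp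
  refine isFacetLabeling_extendAt hβ
    (fun a b h => ⟨fun e => h.ne (congrArg Subtype.val e), Or.inl h⟩)
    (by rcases hc with ⟨rfl, -⟩ | ⟨rfl, -⟩ <;> simp) (fun a hva => ?_) fun u hu => ?_
  · have ha := abs_le.1 (hβ.abs_le_one a)
    rw [abs_le]
    rcases hc with ⟨rfl, w, hvw, hw⟩ | ⟨rfl, hc⟩
    · by_cases haw : a = w
      · subst haw
        omega
      · have := abs_le.1 (hβ.abs_sub_le_one ⟨haw, Or.inr ⟨hva, hvw⟩⟩)
        omega
    · have := hc a hva
      omega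
  · by_cases huv : u = v
    · subst huv
      simp [hc0] at hu
    · rw [extendAt_of_ne huv] at hu
      obtain ⟨w, ⟨-, huw | ⟨hvu, -⟩⟩, hw⟩ := hβ.exists_adj_ne_zero hu
      · exact ⟨w, huw, by simpa using hw⟩
      · exact ⟨v, hvu.symm, by simpa using hc0⟩

end DeletionContraction

section Bounds

variable {V : Type*} [Finite V]

theorem ncard_facetLabelings_le_of_eqOn_compl {G : SimpleGraph V} {s : Set V} (hs : s.Nonempty)
    {f : V → ℤ} (hf : ∀ ⦃u w⦄, u ∈ s → w ∉ s → G.Adj u w → f w = 0) :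
    {β | IsFacetLabeling G β ∧ Set.EqOn β f sᶜ}.ncard ≤
      {β | IsFacetLabeling (G.induce s) β}.ncard :=
  Set.ncard_le_ncard_of_injOn s.domRestrict
    (fun _ hβ => hβ.1.induce hs fun _ _ hu hw huw => (hβ.2 hw).trans (hf hu hw huw))
    (fun _ hβ _ hβ' h => funext fun u => by
      by_cases hu : u ∈ s
      · exact congrFun h ⟨u, hu⟩
      · exact (hβ.2 hu).trans (hβ'.2 hu).symm)
    (finite_setOf_isFacetLabeling _)

theorem ncard_facetLabelings_exists_adj_ne_zero_le (G : SimpleGraph V) (v : V) :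
    {β | IsFacetLabeling G β ∧ β v ≠ 0 ∧ ∃ w, G.Adj v w ∧ β w ≠ 0}.ncard ≤
      {β | IsFacetLabeling (contractVertex G v) β}.ncard :=
  Set.ncard_le_ncard_of_injOn (fun β (u : {u // u ≠ v}) => β u)
    (fun _ ⟨hβ, hv, _, hvw, hw⟩ => hβ.restrict_contractVertex hv hvw hw)
    (fun β ⟨hβ, hv, _⟩ β' ⟨hβ', hv', w, hvw, hw⟩ h => funext fun u => by
      by_cases hu : u = v
      · subst hu
        have : β w = β' w := congrFun h ⟨w, hvw.ne'⟩
        have := hβ.eq_zero_or_eq_of_adj hv hvw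
        have := hβ'.eq_zero_or_eq_of_adj hv' hvw
        omega
      · exact congrFun h ⟨u, hu⟩)
    (finite_setOf_isFacetLabeling _)

theorem ncard_facetLabelings_induce_add_contractVertex_le [DecidableEq V] (G : SimpleGraph V)
    (v : V) :
    {β | IsFacetLabeling (G.induce {u | u ≠ v}) β}.ncard +
        {β | IsFacetLabeling (contractVertex G v) β}.ncard ≤
      {β | IsFacetLabeling G β}.ncard := by
  classical
  refine ncard_add_ncard_le_of_injOn
    (f := fun β => extendAt v (if ∃ w : {u // u ≠ v}, G.Adj v w ∧ β w ≠ 0 then 0 else 1) β)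
    (g := fun β => extendAt v (if ∃ w : {u // u ≠ v}, G.Adj v w ∧ β w = 1 then 1 else -1) β)
    (fun β hβ => isFacetLabeling_extendAt_of_induce hβ ?_)
    (fun β hβ => isFacetLabeling_extendAt_of_contractVertex hβ ?_)
    (fun β _ β' _ h => ?_) (fun β _ β' _ h => ?_) (fun β _ β' _ h => ?_)
    (finite_setOf_isFacetLabeling G)
  · split_ifs with h
    · exact .inl ⟨rfl, h⟩
    · push Not at h
      exact .inr ⟨rfl, h⟩
  · split_ifs with h
    · exact .inl ⟨rfl, h⟩
    · push Not at h
      exact .inr ⟨rfl, h⟩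
  · exact eq_of_extendAt_eq h
  · exact eq_of_extendAt_eq h
  · have hv := congrFun h v
    simp only [extendAt_self] at hv
    split_ifs at hv with h₁ h₂ h₂ <;> norm_num at hv
    obtain ⟨w, hvw, hw⟩ := h₂
    push Not at h₁
    simpa [h₁ w hvw, hw] using congrFun h w

theorem ncard_facetLabelings_le [DecidableEq V] (G : SimpleGraph V) (v : V)
    (hNv : {u | u = v ∨ G.Adj v u} ≠ Set.univ) :
    {β | IsFacetLabeling G β}.ncard ≤
      {β | IsFacetLabeling (G.induce {u | u ≠ v}) β}.ncard +
        2 * {β | IsFacetLabeling (G.induce {u | ¬(u = v ∨ G.Adj v u)}) β}.ncard +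
        {β | IsFacetLabeling (contractVertex G v) β}.ncard := by
  set s := {u | ¬(u = v ∨ G.Adj v u)}
  obtain ⟨u₀, hu₀⟩ : s.Nonempty := (Set.ne_univ_iff_exists_notMem _).1 hNv
  set A₀ := {β | IsFacetLabeling G β ∧ Set.EqOn β 0 {u | u ≠ v}ᶜ}
  set A : ℤ → Set (V → ℤ) := fun ε =>
    {β | IsFacetLabeling G β ∧ Set.EqOn β (Pi.single v ε) sᶜ}
  set A' := {β | IsFacetLabeling G β ∧ β v ≠ 0 ∧ ∃ w, G.Adj v w ∧ β w ≠ 0}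
  have hA₀ : A₀.ncard ≤ {β | IsFacetLabeling (G.induce {u | u ≠ v}) β}.ncard :=
    ncard_facetLabelings_le_of_eqOn_compl (s := {u | u ≠ v}) ⟨u₀, fun h => hu₀ (.inl h)⟩
      fun _ _ _ _ _ => rfl
  have hA : ∀ ε, (A ε).ncard ≤ {β | IsFacetLabeling (G.induce s) β}.ncard := fun ε =>
    ncard_facetLabelings_le_of_eqOn_compl ⟨u₀, hu₀⟩ fun u w hu _ huw =>
      Pi.single_eq_of_ne (M := fun _ => ℤ) (fun hwv => hu (.inr (hwv ▸ huw).symm)) ε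
  have hcover : {β | IsFacetLabeling G β} ⊆ A₀ ∪ A (-1) ∪ A 1 ∪ A' := by
    intro β hβ
    by_cases h0 : β v = 0
    · exact .inl (.inl (.inl ⟨hβ, fun u hu => by simp_all⟩))
    by_cases hN : ∃ w, G.Adj v w ∧ β w ≠ 0
    · exact .inr ⟨hβ, h0, hN⟩
    push Not at hN
    have hEq := eqOn_pi_single_of_forall_adj_eq_zero hN
    rcases hβ.eq_neg_one_or_eq_one h0 with h | h <;> rw [h] at hEq
    · exact .inl (.inl (.inr ⟨hβ, hEq⟩))
    · exact .inl (.inr ⟨hβ, hEq⟩)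
  have hfin : (A₀ ∪ A (-1) ∪ A 1 ∪ A').Finite :=
    (finite_setOf_isFacetLabeling G).subset <| by rintro β (((h | h) | h) | h) <;> exact h.1
  calc {β | IsFacetLabeling G β}.ncard
      ≤ (A₀ ∪ A (-1) ∪ A 1 ∪ A').ncard := Set.ncard_le_ncard hcover hfin
    _ ≤ A₀.ncard + (A (-1)).ncard + (A 1).ncard + A'.ncard := by
      grw [Set.ncard_union_le, Set.ncard_union_le, Set.ncard_union_le]
    _ ≤ _ := by
      have : A'.ncard ≤ _ := ncard_facetLabelings_exists_adj_ne_zero_le G v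
      linarith [hA (-1), hA 1]

end Bounds

theorem numFacets_suspension_bounds_general {V : Type*} [Fintype V] [DecidableEq V]
    (G : SimpleGraph V) (v : V)
    (hNv : {u : V | u = v ∨ G.Adj v u} ≠ Set.univ) :
    numFacets (symEdgePolytope (suspension (G.induce {u : V | u ≠ v}))) +
        numFacets (symEdgePolytope (suspension (contractVertex G v))) ≤
      numFacets (symEdgePolytope (suspension G)) ∧
    numFacets (symEdgePolytope (suspension G)) ≤
      numFacets (symEdgePolytope (suspension (G.induce {u : V | u ≠ v}))) +
        2 * numFacets (symEdgePolytope
          (suspension (G.induce {u : V | ¬(u = v ∨ G.Adj v u)}))) +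
        numFacets (symEdgePolytope (suspension (contractVertex G v))) := by
  simp only [numFacets_symEdgePolytope_suspension]
  exact ⟨ncard_facetLabelings_induce_add_contractVertex_le G v, ncard_facetLabelings_le G v hNv⟩

/-- Let `G` be a graph on `[n-1]` with `n ≥ 3` and let `v` be a vertex
of `G` with `N_G[v] ≠ [n-1]`. Then
`N(P_{(G-v)^}) + N(P_{(G/v)^}) ≤ N(P_Ĝ) ≤ N(P_{(G-v)^}) + 2·N(P_{(G-N_G[v])^}) + N(P_{(G/v)^})`. -/
theorem numFacets_suspension_bounds {V : Type*} [Fintype V] [DecidableEq V]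
    (G : SimpleGraph V) (hn : 3 ≤ Fintype.card V + 1) (v : V)
    (hNv : {u : V | u = v ∨ G.Adj v u} ≠ Set.univ) :
    numFacets (symEdgePolytope (suspension (G.induce {u : V | u ≠ v}))) +
        numFacets (symEdgePolytope (suspension (contractVertex G v))) ≤
      numFacets (symEdgePolytope (suspension G)) ∧
    numFacets (symEdgePolytope (suspension G)) ≤
      numFacets (symEdgePolytope (suspension (G.induce {u : V | u ≠ v}))) +
        2 * numFacets (symEdgePolytope
          (suspension (G.induce {u : V | ¬(u = v ∨ G.Adj v u)}))) +
        numFacets (symEdgePolytope (suspension (contractVertex G v))) :=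
  numFacets_suspension_bounds_general G v hNv
end
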